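/- Let X and Y be Polish topological vector spaces and let c be a cost function on X × Y of the form c(x₁,y₁,x₂,y₂) = h(x₁ − x₂, y₁ − y₂) for some h : X × Y → [0,∞]. Let γ be a probability measure on X × Y and κ = κ_X ⊗ κ_Y a product of probability measures κ_X on X and κ_Y on Y. Then τ_c(γ * κ) ≤ τ_c(γ). If additionally c = d^p for a pseudo-metric d on X × Y with p ≥ 1 and τ_c(γ) < ∞, then τ_c(γ)^{1/p} − τ_c(γ * κ)^{1/p} ≤ 2 (∫ h dκ)^{1/p}. -/

import Mathlib

open MeasureTheory ENNReal Filter Topology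

/-- The optimal transport cost between two measures `μ` and `ν` on a space `Z`
with base cost `c`. -/
noncomputable def otCost {Z : Type*} [MeasurableSpace Z]
    (c : Z → Z → ℝ≥0∞) (μ ν : Measure Z) : ℝ≥0∞ :=
  ⨅ (π : Measure (Z × Z)) (_ : π.map Prod.fst = μ ∧ π.map Prod.snd = ν),
    ∫⁻ p, c p.1 p.2 ∂π

/-- The transport dependency of a measure `γ` on `X × Y`. -/
noncomputable def tdep {X Y : Type*} [MeasurableSpace X] [MeasurableSpace Y]
    (c : X × Y → X × Y → ℝ≥0∞) (γ : Measure (X × Y)) : ℝ≥0∞ :=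
  otCost c γ ((γ.map Prod.fst).prod (γ.map Prod.snd))

/-- Convolution of two measures on a space with addition. -/
noncomputable def mconv {Z : Type*} [MeasurableSpace Z] [Add Z]
    (μ κ : Measure Z) : Measure Z :=
  (μ.prod κ).map fun q => q.1 + q.2

/-!
Translation invariance of the cost lets a coupling `π` of `(μ, ν)` be moved by a common random
shift: `π ∗ (κ pushed to the diagonal)` couples `(μ ∗ κ, ν ∗ κ)` at the same cost. The marginals of
`γ ∗ (κX ⊗ κY)` are those of `γ` convolved with `κX` and `κY`, so their product is
`(γ_X ⊗ γ_Y) ∗ (κX ⊗ κY)`, which gives the first claim.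

For `c = d ^ p`, `T_c ^ (1/p)` satisfies the triangle inequality (glue two couplings along their
common marginal and apply Minkowski's inequality), and the coupling `(z + k, z)` shows that
`T_c(ρ ∗ κ, ρ) ≤ ∫ h dκ`. Going from `γ` to `γ_X ⊗ γ_Y` through `γ ∗ κ` and `(γ_X ⊗ γ_Y) ∗ κ`
gives the second claim.
-/

open ProbabilityTheory Function

lemma mconv_eq_conv {Z : Type*} [AddMonoid Z] [MeasurableSpace Z] (μ κ : Measure Z) :
    mconv μ κ = μ ∗ κ :=
  rfl

section Coupling

variable {Z : Type*} [MeasurableSpace Z]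

lemma isFiniteMeasure_of_map_fst {π : Measure (Z × Z)} {μ : Measure Z} [IsFiniteMeasure μ]
    (h : π.map Prod.fst = μ) : IsFiniteMeasure π :=
  ⟨by rw [← Measure.fst_univ, Measure.fst, h]; exact measure_lt_top μ _⟩

lemma otCost_le_lintegral {c : Z → Z → ℝ≥0∞} {μ ν : Measure Z} (π : Measure (Z × Z))
    (h₁ : π.map Prod.fst = μ) (h₂ : π.map Prod.snd = ν) :
    otCost c μ ν ≤ ∫⁻ q, c q.1 q.2 ∂π :=
  iInf₂_le π ⟨h₁, h₂⟩

lemma otCost_comm {c : Z → Z → ℝ≥0∞} (hc : Measurable (uncurry c))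
    (hc_symm : ∀ a b, c a b = c b a) (μ ν : Measure Z) :
    otCost c μ ν = otCost c ν μ := by
  suffices ∀ μ ν, otCost c ν μ ≤ otCost c μ ν from le_antisymm (this ν μ) (this μ ν)
  refine fun μ ν ↦ le_iInf₂ fun π hπ ↦ ?_
  refine (otCost_le_lintegral (π.map Prod.swap) ?_ ?_).trans_eq ?_
  · rw [Measure.map_map measurable_fst measurable_swap]; exact hπ.2
  · rw [Measure.map_map measurable_snd measurable_swap]; exact hπ.1
  · rw [lintegral_map (f := fun q ↦ c q.1 q.2) hc measurable_swap]
    exact lintegral_congr fun q ↦ hc_symm _ _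

lemma otCost_rpow {c : Z → Z → ℝ≥0∞} {r : ℝ} (hr : 0 < r) (μ ν : Measure Z) :
    otCost c μ ν ^ r =
      ⨅ (π : Measure (Z × Z)) (_ : π.map Prod.fst = μ ∧ π.map Prod.snd = ν),
        (∫⁻ q, c q.1 q.2 ∂π) ^ r := by
  simp only [otCost, ← ENNReal.orderIsoRpow_apply r hr, OrderIso.map_iInf]

end Coupling

lemma MeasureTheory.Measure.map_prodMap_compProd_comap {α β γ : Type*} [MeasurableSpace α]
    [MeasurableSpace β] [MeasurableSpace γ] (μ : Measure α) [SFinite μ]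
    (κ : Kernel β γ) [IsSFiniteKernel κ] {f : α → β} (hf : Measurable f) :
    (μ ⊗ₘ κ.comap f hf).map (Prod.map f id) = μ.map f ⊗ₘ κ := by
  ext s hs
  rw [Measure.map_apply (hf.prodMap measurable_id) hs, Measure.compProd_apply hs,
    Measure.compProd_apply (hf.prodMap measurable_id hs),
    lintegral_map (Kernel.measurable_kernel_prodMk_left hs) hf]
  rfl

section Gluing

variable {Z : Type*} [MeasurableSpace Z] [StandardBorelSpace Z] [Nonempty Z]

lemma exists_gluing (π₁ π₂ : Measure (Z × Z)) [IsFiniteMeasure π₁] [IsFiniteMeasure π₂]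
    (h : π₁.map Prod.snd = π₂.map Prod.fst) :
    ∃ η : Measure ((Z × Z) × Z),
      η.map Prod.fst = π₁ ∧ η.map (Prod.map Prod.snd id) = π₂ := by
  refine ⟨π₁ ⊗ₘ π₂.condKernel.comap Prod.snd measurable_snd, Measure.fst_compProd _ _, ?_⟩
  rw [Measure.map_prodMap_compProd_comap, h]
  exact π₂.disintegrate π₂.condKernel

lemma otCost_rpow_le_of_gluing {d : Z → Z → ℝ≥0∞} (hd : Measurable (uncurry d))
    (hd_tri : ∀ a b e, d a e ≤ d a b + d b e) {p : ℝ} (hp : 1 ≤ p)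
    (π₁ π₂ : Measure (Z × Z)) [IsFiniteMeasure π₁] [IsFiniteMeasure π₂]
    (h : π₁.map Prod.snd = π₂.map Prod.fst) :
    otCost (fun a b ↦ d a b ^ p) (π₁.map Prod.fst) (π₂.map Prod.snd) ^ (1 / p) ≤
      (∫⁻ q, d q.1 q.2 ^ p ∂π₁) ^ (1 / p) + (∫⁻ q, d q.1 q.2 ^ p ∂π₂) ^ (1 / p) := by
  obtain ⟨η, hη₁, hη₂⟩ := exists_gluing π₁ π₂ h
  have hdp : Measurable fun q : Z × Z ↦ d q.1 q.2 ^ p := hd.pow_const p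
  have hπ₁₃ : Measurable fun q : (Z × Z) × Z ↦ (q.1.1, q.2) := by fun_prop
  have hπ₂₃ : Measurable (Prod.map Prod.snd id : (Z × Z) × Z → Z × Z) := by fun_prop
  have h_fst : (η.map fun q ↦ (q.1.1, q.2)).map Prod.fst = π₁.map Prod.fst := by
    rw [← hη₁, Measure.map_map measurable_fst hπ₁₃, Measure.map_map measurable_fst measurable_fst]
    rfl
  have h_snd : (η.map fun q ↦ (q.1.1, q.2)).map Prod.snd = π₂.map Prod.snd := by
    rw [← hη₂, Measure.map_map measurable_snd hπ₁₃, Measure.map_map measurable_snd hπ₂₃]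
    rfl
  calc otCost (fun a b ↦ d a b ^ p) (π₁.map Prod.fst) (π₂.map Prod.snd) ^ (1 / p)
      ≤ (∫⁻ q, d q.1.1 q.2 ^ p ∂η) ^ (1 / p) := by
        gcongr
        exact (otCost_le_lintegral _ h_fst h_snd).trans_eq (lintegral_map hdp hπ₁₃)
    _ ≤ (∫⁻ q, (d q.1.1 q.1.2 + d q.1.2 q.2) ^ p ∂η) ^ (1 / p) := by
        gcongr with q
        exact hd_tri _ _ _
    _ ≤ (∫⁻ q, d q.1.1 q.1.2 ^ p ∂η) ^ (1 / p) + (∫⁻ q, d q.1.2 q.2 ^ p ∂η) ^ (1 / p) :=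
        ENNReal.lintegral_Lp_add_le (f := fun q : (Z × Z) × Z ↦ d q.1.1 q.1.2)
          (g := fun q : (Z × Z) × Z ↦ d q.1.2 q.2)
          (by fun_prop) (by fun_prop) hp
    _ = (∫⁻ q, d q.1 q.2 ^ p ∂π₁) ^ (1 / p) + (∫⁻ q, d q.1 q.2 ^ p ∂π₂) ^ (1 / p) := by
        rw [← hη₁, ← hη₂, lintegral_map hdp measurable_fst, lintegral_map hdp hπ₂₃]
        rfl

lemma otCost_rpow_triangle {d : Z → Z → ℝ≥0∞} (hd : Measurable (uncurry d))
    (hd_tri : ∀ a b e, d a e ≤ d a b + d b e) {p : ℝ} (hp : 1 ≤ p)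
    (μ ρ ν : Measure Z) [IsFiniteMeasure μ] [IsFiniteMeasure ρ] :
    otCost (fun a b ↦ d a b ^ p) μ ν ^ (1 / p) ≤
      otCost (fun a b ↦ d a b ^ p) μ ρ ^ (1 / p) + otCost (fun a b ↦ d a b ^ p) ρ ν ^ (1 / p) := by
  have hr : 0 < 1 / p := by positivity
  simp only [otCost_rpow hr μ ρ, otCost_rpow hr ρ ν, ENNReal.iInf_add, ENNReal.add_iInf]
  refine le_iInf₂ fun π₂ ⟨h₃, h₄⟩ ↦ le_iInf₂ fun π₁ ⟨h₁, h₂⟩ ↦ ?_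
  have := isFiniteMeasure_of_map_fst h₁
  have := isFiniteMeasure_of_map_fst h₃
  subst h₁ h₄
  exact otCost_rpow_le_of_gluing hd hd_tri hp π₁ π₂ (h₂.trans h₃.symm)

end Gluing

instance Prod.instMeasurableAdd₂ {M N : Type*} [Add M] [Add N] [MeasurableSpace M]
    [MeasurableSpace N] [MeasurableAdd₂ M] [MeasurableAdd₂ N] : MeasurableAdd₂ (M × N) :=
  ⟨(measurable_fst.fst.add measurable_snd.fst).prodMk (measurable_fst.snd.add measurable_snd.snd)⟩

section Translation

variable {Z : Type*} [AddMonoid Z] [MeasurableSpace Z] [MeasurableAdd₂ Z]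

lemma otCost_conv_le {c : Z → Z → ℝ≥0∞} (hc : Measurable (uncurry c))
    (hc_add : ∀ a b k, c (a + k) (b + k) = c a b)
    (μ ν κ : Measure Z) [IsFiniteMeasure μ] [IsProbabilityMeasure κ] :
    otCost c (μ ∗ κ) (ν ∗ κ) ≤ otCost c μ ν := by
  refine le_iInf₂ fun π ⟨h₁, h₂⟩ ↦ ?_
  have := isFiniteMeasure_of_map_fst h₁
  set κ₂ := κ.map fun k ↦ (k, k)
  have hdiag : Measurable fun k : Z ↦ (k, k) := by fun_prop
  have hκ₂_fst : κ₂.map Prod.fst = κ := by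
    rw [Measure.map_map measurable_fst hdiag]; exact Measure.map_id
  have hκ₂_snd : κ₂.map Prod.snd = κ := by
    rw [Measure.map_map measurable_snd hdiag]; exact Measure.map_id
  refine (otCost_le_lintegral (π ∗ κ₂) ?_ ?_).trans_eq ?_
  · rw [← h₁, ← hκ₂_fst]
    exact Measure.map_conv_addMonoidHom (AddMonoidHom.fst Z Z) measurable_fst
  · rw [← h₂, ← hκ₂_snd]
    exact Measure.map_conv_addMonoidHom (AddMonoidHom.snd Z Z) measurable_snd
  rw [Measure.lintegral_conv (f := fun q : Z × Z ↦ c q.1 q.2) hc]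
  refine lintegral_congr fun q ↦ ?_
  rw [lintegral_map (f := fun w ↦ c (q + w).1 (q + w).2) (by fun_prop) hdiag]
  simp only [Prod.fst_add, Prod.snd_add, hc_add, lintegral_const, measure_univ, mul_one]

lemma otCost_conv_self_le {c : Z → Z → ℝ≥0∞} {h : Z → ℝ≥0∞} (hh : Measurable h)
    (hch : ∀ a k, c (a + k) a = h k) (μ κ : Measure Z) [IsProbabilityMeasure μ]
    [IsProbabilityMeasure κ] :
    otCost c (μ ∗ κ) μ ≤ ∫⁻ k, h k ∂κ := by
  have hT : Measurable fun q : Z × Z ↦ (q.1 + q.2, q.1) := by fun_prop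
  refine (otCost_le_lintegral ((μ.prod κ).map fun q ↦ (q.1 + q.2, q.1)) ?_ ?_).trans ?_
  · exact Measure.map_map measurable_fst hT
  · rw [Measure.map_map measurable_snd hT]
    exact (Measure.map_fst_prod).trans (by simp)
  calc ∫⁻ q, c q.1 q.2 ∂((μ.prod κ).map fun q ↦ (q.1 + q.2, q.1))
      ≤ ∫⁻ q, h q.2 ∂μ.prod κ := (lintegral_map_le _ _).trans_eq (by simp only [hch])
    _ = ∫⁻ k, h k ∂κ := by
      rw [← lintegral_map hh measurable_snd, Measure.map_snd_prod, measure_univ, one_smul]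

end Translation

lemma otCost_rpow_le_otCost_conv_rpow_add {Z : Type*} [AddMonoid Z] [MeasurableSpace Z]
    [MeasurableAdd₂ Z] [StandardBorelSpace Z] [Nonempty Z] {d : Z → Z → ℝ≥0∞}
    (hd : Measurable (uncurry d)) (hd_symm : ∀ a b, d a b = d b a)
    (hd_tri : ∀ a b e, d a e ≤ d a b + d b e) {p : ℝ} (hp : 1 ≤ p) {h : Z → ℝ≥0∞}
    (hh : Measurable h) (hdh : ∀ a k, d (a + k) a ^ p = h k)
    (μ ν κ : Measure Z) [IsProbabilityMeasure μ] [IsProbabilityMeasure ν]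
    [IsProbabilityMeasure κ] :
    otCost (fun a b ↦ d a b ^ p) μ ν ^ (1 / p) ≤
      otCost (fun a b ↦ d a b ^ p) (μ ∗ κ) (ν ∗ κ) ^ (1 / p) + 2 * (∫⁻ k, h k ∂κ) ^ (1 / p) := by
  set W := fun μ ν ↦ otCost (fun a b ↦ d a b ^ p) μ ν ^ (1 / p)
  have h_tri := otCost_rpow_triangle hd hd_tri hp
  have h_shift (ρ : Measure Z) [IsProbabilityMeasure ρ] : W (ρ ∗ κ) ρ ≤ (∫⁻ k, h k ∂κ) ^ (1 / p) :=
    ENNReal.rpow_le_rpow (otCost_conv_self_le hh hdh ρ κ) (by positivity)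
  have h_comm : W μ (μ ∗ κ) = W (μ ∗ κ) μ := by
    simp only [W, otCost_comm (c := fun a b ↦ d a b ^ p) (hd.pow_const p) fun a b ↦ by rw [hd_symm]]
  calc W μ ν
      ≤ W μ (μ ∗ κ) + W (μ ∗ κ) ν := h_tri _ _ _
    _ ≤ W μ (μ ∗ κ) + (W (μ ∗ κ) (ν ∗ κ) + W (ν ∗ κ) ν) := by gcongr; exact h_tri _ _ _
    _ ≤ (∫⁻ k, h k ∂κ) ^ (1 / p) + (W (μ ∗ κ) (ν ∗ κ) + (∫⁻ k, h k ∂κ) ^ (1 / p)) := by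
        gcongr
        · exact h_comm ▸ h_shift μ
        · exact h_shift ν
    _ = W (μ ∗ κ) (ν ∗ κ) + 2 * (∫⁻ k, h k ∂κ) ^ (1 / p) := by ring

section Product

variable {X Y : Type*} [AddCommMonoid X] [MeasurableSpace X] [AddCommMonoid Y] [MeasurableSpace Y]

@[fun_prop]
lemma measurable_addMonoidHom_inl : Measurable (AddMonoidHom.inl X Y) :=
  measurable_id.prodMk measurable_const

@[fun_prop]
lemma measurable_addMonoidHom_inr : Measurable (AddMonoidHom.inr X Y) :=
  measurable_const.prodMk measurable_id

variable [MeasurableAdd₂ X] [MeasurableAdd₂ Y]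

lemma map_fst_conv_prod (γ : Measure (X × Y)) [SFinite γ] (κX : Measure X) (κY : Measure Y)
    [SFinite κX] [IsProbabilityMeasure κY] :
    (γ ∗ κX.prod κY).map Prod.fst = γ.map Prod.fst ∗ κX := by
  refine (Measure.map_conv_addMonoidHom (AddMonoidHom.fst X Y) measurable_fst).trans ?_
  simp

lemma map_snd_conv_prod (γ : Measure (X × Y)) [SFinite γ] (κX : Measure X) (κY : Measure Y)
    [IsProbabilityMeasure κX] [SFinite κY] :
    (γ ∗ κX.prod κY).map Prod.snd = γ.map Prod.snd ∗ κY := by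
  refine (Measure.map_conv_addMonoidHom (AddMonoidHom.snd X Y) measurable_snd).trans ?_
  simp

lemma prod_eq_conv (μ : Measure X) (ν : Measure Y) [SFinite μ] [SFinite ν] :
    μ.prod ν = μ.map (AddMonoidHom.inl X Y) ∗ ν.map (AddMonoidHom.inr X Y) := by
  rw [Measure.conv, Measure.map_prod_map _ _ (by fun_prop) (by fun_prop),
    Measure.map_map (by fun_prop) (by fun_prop)]
  convert Measure.map_id.symm
  ext <;> simp

lemma prod_conv_prod (μ κX : Measure X) (ν κY : Measure Y) [SFinite μ] [SFinite κX]
    [SFinite ν] [SFinite κY] :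
    μ.prod ν ∗ κX.prod κY = (μ ∗ κX).prod (ν ∗ κY) := by
  rw [prod_eq_conv μ, prod_eq_conv κX, prod_eq_conv,
    Measure.map_conv_addMonoidHom _ (by fun_prop), Measure.map_conv_addMonoidHom _ (by fun_prop),
    Measure.conv_assoc, ← Measure.conv_assoc (ν.map _), Measure.conv_comm (ν.map _),
    Measure.conv_assoc, ← Measure.conv_assoc]

end Product

theorem tdep_conv_le_general
    {X Y : Type*}
    [AddCommGroup X] [TopologicalSpace X] [IsTopologicalAddGroup X]
    [PolishSpace X] [MeasurableSpace X] [BorelSpace X]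
    [AddCommGroup Y] [TopologicalSpace Y] [IsTopologicalAddGroup Y]
    [PolishSpace Y] [MeasurableSpace Y] [BorelSpace Y]
    (h : X × Y → ℝ≥0∞)
    (c : X × Y → X × Y → ℝ≥0∞) (hch : ∀ z₁ z₂ : X × Y, c z₁ z₂ = h (z₁ - z₂))
    (hc_lsc : LowerSemicontinuous (Function.uncurry c))
    (γ : Measure (X × Y)) [IsProbabilityMeasure γ]
    (κX : Measure X) (κY : Measure Y)
    [IsProbabilityMeasure κX] [IsProbabilityMeasure κY] :
    tdep c (mconv γ (κX.prod κY)) ≤ tdep c γ ∧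
      ∀ (d : X × Y → X × Y → ℝ≥0∞) (p : ℝ), 1 ≤ p →
        (∀ z₁ z₂, d z₁ z₂ = d z₂ z₁) → (∀ z, d z z = 0) →
        (∀ z₁ z₂ z₃, d z₁ z₃ ≤ d z₁ z₂ + d z₂ z₃) →
        (∀ z₁ z₂, c z₁ z₂ = d z₁ z₂ ^ p) →
        tdep c γ ≠ ∞ →
        tdep c γ ^ (1 / p) - tdep c (mconv γ (κX.prod κY)) ^ (1 / p)
          ≤ 2 * (∫⁻ z, h z ∂(κX.prod κY)) ^ (1 / p) := by
  have hc : Measurable (uncurry c) := hc_lsc.measurable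
  have hh : Measurable h := by
    have : h = fun z ↦ c z 0 := funext fun z ↦ by rw [hch, sub_zero]
    exact this ▸ hc.comp (measurable_id.prodMk measurable_const)
  set κ := κX.prod κY
  set m := (γ.map Prod.fst).prod (γ.map Prod.snd)
  have : IsProbabilityMeasure m := inferInstanceAs (IsProbabilityMeasure (γ.fst.prod γ.snd))
  have h_tdep : tdep c γ = otCost c γ m := rfl
  have h_tdep_conv : tdep c (mconv γ κ) = otCost c (γ ∗ κ) (m ∗ κ) := by
    rw [tdep, mconv_eq_conv, map_fst_conv_prod, map_snd_conv_prod, prod_conv_prod]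
  refine ⟨?_, fun d p hp hd_symm _ hd_tri hcd _ ↦ ?_⟩
  · rw [h_tdep, h_tdep_conv]
    exact otCost_conv_le hc (fun a b k ↦ by rw [hch, hch, add_sub_add_right_eq_sub]) γ m κ
  have hc_eq : c = fun a b ↦ d a b ^ p := funext₂ hcd
  have hd : Measurable (uncurry d) := by
    convert hc.pow_const p⁻¹ with q
    simp only [uncurry_def, hcd]
    rw [ENNReal.rpow_rpow_inv (by positivity)]
  rw [h_tdep, h_tdep_conv, hc_eq, tsub_le_iff_left]
  exact otCost_rpow_le_otCost_conv_rpow_add hd hd_symm hd_tri hp hh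
    (fun a k ↦ by rw [← hcd, hch, add_sub_cancel_left]) γ m κ

/-- For a translation invariant cost
`c(x₁,y₁,x₂,y₂) = h(x₁ − x₂, y₁ − y₂)` on the product of two Polish topological vector
spaces and a product kernel `κ = κ_X ⊗ κ_Y`, convolving `γ` with `κ` does not increase
the transport dependency: `τ(γ * κ) ≤ τ(γ)`. If moreover `c = d^p` for a pseudo-metric
`d` on `X × Y` and `p ≥ 1`, and `τ(γ) < ∞`, then
`τ(γ)^{1/p} − τ(γ * κ)^{1/p} ≤ 2 (∫ h dκ)^{1/p}`. -/
theorem tdep_conv_le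
    {X Y : Type*}
    [AddCommGroup X] [Module ℝ X] [TopologicalSpace X] [IsTopologicalAddGroup X]
    [ContinuousSMul ℝ X] [PolishSpace X] [MeasurableSpace X] [BorelSpace X]
    [AddCommGroup Y] [Module ℝ Y] [TopologicalSpace Y] [IsTopologicalAddGroup Y]
    [ContinuousSMul ℝ Y] [PolishSpace Y] [MeasurableSpace Y] [BorelSpace Y]
    (h : X × Y → ℝ≥0∞)
    (c : X × Y → X × Y → ℝ≥0∞) (hch : ∀ z₁ z₂ : X × Y, c z₁ z₂ = h (z₁ - z₂))
    (hc_lsc : LowerSemicontinuous (Function.uncurry c))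
    (hc_symm : ∀ z₁ z₂, c z₁ z₂ = c z₂ z₁)
    (hc_diag : ∀ z, c z z = 0)
    (γ : Measure (X × Y)) [IsProbabilityMeasure γ]
    (κX : Measure X) (κY : Measure Y)
    [IsProbabilityMeasure κX] [IsProbabilityMeasure κY] :
    tdep c (mconv γ (κX.prod κY)) ≤ tdep c γ ∧
      ∀ (d : X × Y → X × Y → ℝ≥0∞) (p : ℝ), 1 ≤ p →
        (∀ z₁ z₂, d z₁ z₂ = d z₂ z₁) → (∀ z, d z z = 0) →
        (∀ z₁ z₂ z₃, d z₁ z₃ ≤ d z₁ z₂ + d z₂ z₃) →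
        (∀ z₁ z₂, c z₁ z₂ = d z₁ z₂ ^ p) →
        tdep c γ ≠ ∞ →
        tdep c γ ^ (1 / p) - tdep c (mconv γ (κX.prod κY)) ^ (1 / p)
          ≤ 2 * (∫⁻ z, h z ∂(κX.prod κY)) ^ (1 / p) :=
  tdep_conv_le_general h c hch hc_lsc γ κX κY
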